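/- arXiv:2410.18370 — 3 statements merged into one kernel-verified Lean document; each statement's English description precedes it below -/
import Mathlib

section
/- For any constant c > 0, the function B ↦ 1 / (B · log(1 + c/B)) (natural logarithm) is convex on (0, ∞). (Consequently, the objective of the bandwidth-allocation problem (P3), 1/(ρ·R(B_u)) + 1/R(B_d), is a convex function of (B_u, B_d) on the positive orthant, so (P3) is a convex optimization problem.) -/
/-!
`B ↦ B log(1 + c/B)` is concave on `(0, ∞)`: its second derivative is `-c² / (B (B + c)²)`.
It is also positive there, and the reciprocal of a positive concave function is convex,
since `t ↦ t⁻¹` is convex and antitone on `(0, ∞)`.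
-/

open Real Set

theorem ConcaveOn.convexOn_inv {𝕜 E : Type*} [Field 𝕜] [LinearOrder 𝕜] [IsStrictOrderedRing 𝕜]
    [AddCommMonoid E] [Module 𝕜 E] {s : Set E} {g : E → 𝕜} (hg : ConcaveOn 𝕜 s g)
    (hpos : ∀ x ∈ s, 0 < g x) : ConvexOn 𝕜 s fun x ↦ (g x)⁻¹ := by
  refine ⟨hg.1, fun x hx y hy a b ha hb hab ↦ ?_⟩
  have hmix : 0 < a • g x + b • g y :=
    convex_Ioi (0 : 𝕜) (hpos x hx) (hpos y hy) ha hb hab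
  calc (g (a • x + b • y))⁻¹ ≤ (a • g x + b • g y)⁻¹ := inv_anti₀ hmix (hg.2 hx hy ha hb hab)
    _ ≤ a • (g x)⁻¹ + b • (g y)⁻¹ := by
      simpa only [zpow_neg_one] using
        (convexOn_zpow (𝕜 := 𝕜) (-1)).2 (hpos x hx) (hpos y hy) ha hb hab

noncomputable def shannonRate (c B : ℝ) : ℝ := B * log (1 + c / B)

section

variable {c B : ℝ}

theorem hasDerivAt_log_one_add_div (hB : B ≠ 0) (hBc : B + c ≠ 0) :
    HasDerivAt (fun B ↦ log (1 + c / B)) (-(c / (B * (B + c)))) B := by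
  have hne : 1 + c / B ≠ 0 := by
    rwa [one_add_div hB, div_ne_zero_iff, and_iff_left hB]
  convert (((hasDerivAt_const B c).fun_div (hasDerivAt_id' B) hB).const_add 1).log hne using 1
  field_simp
  ring

theorem hasDerivAt_shannonRate (hB : B ≠ 0) (hBc : B + c ≠ 0) :
    HasDerivAt (shannonRate c) (log (1 + c / B) - c / (B + c)) B := by
  refine ((hasDerivAt_id' B).fun_mul (hasDerivAt_log_one_add_div hB hBc)).congr_deriv ?_
  field_simp
  ring

theorem hasDerivAt_deriv_shannonRate (hB : B ≠ 0) (hBc : B + c ≠ 0) :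
    HasDerivAt (fun B ↦ log (1 + c / B) - c / (B + c)) (-(c ^ 2 / (B * (B + c) ^ 2))) B := by
  refine ((hasDerivAt_log_one_add_div hB hBc).fun_sub
    ((hasDerivAt_const B c).fun_div ((hasDerivAt_id' B).add_const c) hBc)).congr_deriv ?_
  field_simp
  ring

theorem concaveOn_shannonRate (hc : 0 ≤ c) : ConcaveOn ℝ (Ioi 0) (shannonRate c) := by
  have hne : ∀ x ∈ Ioi (0 : ℝ), x ≠ 0 ∧ x + c ≠ 0 := fun x (hx : 0 < x) ↦
    ⟨hx.ne', by positivity⟩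
  refine concaveOn_of_hasDerivWithinAt2_nonpos (convex_Ioi 0)
    (f' := fun B ↦ log (1 + c / B) - c / (B + c)) (f'' := fun B ↦ -(c ^ 2 / (B * (B + c) ^ 2)))
    (fun x hx ↦ (hasDerivAt_shannonRate (hne x hx).1 (hne x hx).2).continuousAt.continuousWithinAt)
    (fun x hx ↦ ?_) (fun x hx ↦ ?_) (fun x hx ↦ ?_) <;> rw [interior_Ioi] at hx
  · exact (hasDerivAt_shannonRate (hne x hx).1 (hne x hx).2).hasDerivWithinAt
  · exact (hasDerivAt_deriv_shannonRate (hne x hx).1 (hne x hx).2).hasDerivWithinAt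
  · have hx : 0 < x := hx
    exact neg_nonpos.2 (by positivity)

theorem shannonRate_pos (hc : 0 < c) (hB : 0 < B) : 0 < shannonRate c B :=
  mul_pos hB (log_pos (lt_add_of_pos_right 1 (div_pos hc hB)))

end

/-- For any constant `c > 0`, the reciprocal rate `B ↦ 1 / (B · log(1 + c/B))`
(natural logarithm) is convex on `(0, ∞)`. Hence the objective of the
bandwidth-allocation problem (P3) is convex. -/
theorem inv_shannon_rate_convexOn (c : ℝ) (hc : 0 < c) :
    ConvexOn ℝ (Set.Ioi (0 : ℝ))
      (fun B : ℝ => 1 / (B * Real.log (1 + c / B))) := by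
  simpa only [one_div, shannonRate] using
    (concaveOn_shannonRate hc.le).convexOn_inv fun _ hB ↦ shannonRate_pos hc hB
end

section
/- (Lemma 1, task-level uplink–downlink balance.) Let ρ ∈ (0,1], α ≥ 0, f_max > 0, T > 0, B_max > 0 and c_u, c_d > 0. Define rates R_u(B) = B·log₂(1 + c_u/B) and R_d(B) = B·log₂(1 + c_d/B) for B > 0, extended by R_u(0) = R_d(0) = 0. Consider maximizing the objective J(t_u, t_d, B_u, B_d) = min(ρ·t_u·R_u(B_u), t_d·R_d(B_d)) over all t_u, t_d, B_u, B_d ≥ 0 satisfying B_u + B_d ≤ B_max and t_u + α·t_u·R_u(B_u)/f_max + t_d ≤ T. Then any maximizer (t_u*, t_d*, B_u*, B_d*) satisfies the task-level balance ρ·t_u*·R_u(B_u*) = t_d*·R_d(B_d*), and the optimal value is strictly positive. -/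
/-- **Lemma 1 (task-level uplink–downlink balance).**
Let `ρ ∈ (0,1]`, `α ≥ 0`, `f_max > 0`, `T > 0`, `B_max > 0`, `c_u, c_d > 0`,
with Shannon rates `R_u(B) = B·log₂(1 + c_u/B)` and `R_d(B) = B·log₂(1 + c_d/B)`
(which vanish at `B = 0`). Any maximizer of the closed-loop entropy rate
`min(ρ·t_u·R_u(B_u), t_d·R_d(B_d))` over `t_u, t_d, B_u, B_d ≥ 0` with
`B_u + B_d ≤ B_max` and `t_u + α·t_u·R_u(B_u)/f_max + t_d ≤ T` satisfies the
task-level balance `ρ·t_u·R_u(B_u) = t_d·R_d(B_d)`, and the optimal value is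
strictly positive. -/
theorem task_level_balance
    (ρ α fmax T Bmax cu cd : ℝ)
    (hρ0 : 0 < ρ) (hρ1 : ρ ≤ 1) (hα : 0 ≤ α) (hf : 0 < fmax)
    (hT : 0 < T) (hB : 0 < Bmax) (hcu : 0 < cu) (hcd : 0 < cd)
    (Ru Rd : ℝ → ℝ)
    (hRu : ∀ B : ℝ, Ru B = B * Real.logb 2 (1 + cu / B))
    (hRd : ∀ B : ℝ, Rd B = B * Real.logb 2 (1 + cd / B))
    (tu td Bu Bd : ℝ)
    (htu : 0 ≤ tu) (htd : 0 ≤ td) (hBu : 0 ≤ Bu) (hBd : 0 ≤ Bd)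
    (hband : Bu + Bd ≤ Bmax)
    (htime : tu + α * tu * Ru Bu / fmax + td ≤ T)
    (hopt : ∀ tu' td' Bu' Bd' : ℝ, 0 ≤ tu' → 0 ≤ td' → 0 ≤ Bu' → 0 ≤ Bd' →
      Bu' + Bd' ≤ Bmax → tu' + α * tu' * Ru Bu' / fmax + td' ≤ T →
      min (ρ * (tu' * Ru Bu')) (td' * Rd Bd') ≤
        min (ρ * (tu * Ru Bu)) (td * Rd Bd)) :
    ρ * (tu * Ru Bu) = td * Rd Bd ∧
      0 < min (ρ * (tu * Ru Bu)) (td * Rd Bd) := by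
  have hRpos : ∀ (c B : ℝ), 0 < c → 0 < B → 0 < B * Real.logb 2 (1 + c / B) := by
    intro c B hc hBp
    have h1 : 1 < 1 + c / B := by
      have := div_pos hc hBp; linarith
    exact mul_pos hBp (Real.logb_pos one_lt_two h1)
  -- Step 1: positive optimal value via a feasible point
  have hBm2 : 0 < Bmax / 2 := by linarith
  have hru0 : 0 < Ru (Bmax / 2) := by rw [hRu]; exact hRpos _ _ hcu hBm2
  have hrd0 : 0 < Rd (Bmax / 2) := by rw [hRd]; exact hRpos _ _ hcd hBm2
  obtain ⟨k0, hk0⟩ : ∃ k0 : ℝ, k0 = 1 + α * Ru (Bmax / 2) / fmax := ⟨_, rfl⟩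
  have hk0pos : 0 < k0 := by
    have : 0 ≤ α * Ru (Bmax / 2) / fmax := by positivity
    rw [hk0]; linarith
  obtain ⟨tu0, htu0⟩ : ∃ tu0 : ℝ, tu0 = (T / 2) / k0 := ⟨_, rfl⟩
  have htu0pos : 0 < tu0 := by rw [htu0]; positivity
  have htime0 : tu0 + α * tu0 * Ru (Bmax / 2) / fmax + T / 2 ≤ T := by
    have h1 : tu0 + α * tu0 * Ru (Bmax / 2) / fmax = tu0 * k0 := by
      rw [hk0]; field_simp
    have h2 : tu0 * k0 = T / 2 := by
      rw [htu0]; field_simp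
    linarith [h1, h2]
  have hmin_pos : 0 < min (ρ * (tu * Ru Bu)) (td * Rd Bd) := by
    refine lt_of_lt_of_le ?_ (hopt tu0 (T / 2) (Bmax / 2) (Bmax / 2)
      (le_of_lt htu0pos) (by linarith) (le_of_lt hBm2) (le_of_lt hBm2)
      (by linarith) htime0)
    exact lt_min (by positivity) (by positivity)
  have h1 : 0 < ρ * (tu * Ru Bu) := lt_of_lt_of_le hmin_pos (min_le_left _ _)
  have h2 : 0 < td * Rd Bd := lt_of_lt_of_le hmin_pos (min_le_right _ _)
  have h3 : 0 < tu * Ru Bu := by nlinarith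
  have htu' : 0 < tu := by
    rcases mul_pos_iff.mp h3 with ⟨a, _⟩ | ⟨a, _⟩
    · exact a
    · linarith
  have hru' : 0 < Ru Bu := by
    rcases mul_pos_iff.mp h3 with ⟨_, b⟩ | ⟨_, b⟩
    · exact b
    · linarith
  have htd' : 0 < td := by
    rcases mul_pos_iff.mp h2 with ⟨a, _⟩ | ⟨a, _⟩
    · exact a
    · linarith
  have hrd' : 0 < Rd Bd := by
    rcases mul_pos_iff.mp h2 with ⟨_, b⟩ | ⟨_, b⟩
    · exact b
    · linarith
  refine ⟨?_, hmin_pos⟩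
  rcases lt_trichotomy (ρ * (tu * Ru Bu)) (td * Rd Bd) with hlt | heq | hgt
  · -- increase tu, decrease td
    exfalso
    obtain ⟨k, hk⟩ : ∃ k : ℝ, k = 1 + α * Ru Bu / fmax := ⟨_, rfl⟩
    have hkpos : 0 < k := by
      have : 0 ≤ α * Ru Bu / fmax := by positivity
      rw [hk]; linarith
    obtain ⟨s, hs⟩ : ∃ s : ℝ, s = ρ * Ru Bu + k * Rd Bd := ⟨_, rfl⟩
    have hspos : 0 < s := by rw [hs]; positivity
    obtain ⟨δ, hδ⟩ : ∃ δ : ℝ,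
        δ = min (td / k) ((td * Rd Bd - ρ * (tu * Ru Bu)) / s) := ⟨_, rfl⟩
    have hδpos : 0 < δ := by
      rw [hδ]; exact lt_min (by positivity) (div_pos (by linarith) hspos)
    have hδ1 : δ * k ≤ td := by
      refine (le_div_iff₀ hkpos).mp ?_
      rw [hδ]; exact min_le_left _ _
    have hδ2 : δ * s ≤ td * Rd Bd - ρ * (tu * Ru Bu) := by
      refine (le_div_iff₀ hspos).mp ?_
      rw [hδ]; exact min_le_right _ _
    have hexp : (tu + δ) + α * (tu + δ) * Ru Bu / fmax + (td - δ * k)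
        = tu + α * tu * Ru Bu / fmax + td := by
      rw [hk]; field_simp; ring
    have htime' : (tu + δ) + α * (tu + δ) * Ru Bu / fmax + (td - δ * k) ≤ T := by
      rw [hexp]; exact htime
    rw [hs] at hδ2
    have e1 : ρ * ((tu + δ) * Ru Bu) = ρ * (tu * Ru Bu) + δ * (ρ * Ru Bu) := by
      ring
    have e2 : (td - δ * k) * Rd Bd = td * Rd Bd - δ * (k * Rd Bd) := by ring
    have e3 : δ * (ρ * Ru Bu + k * Rd Bd)
        = δ * (ρ * Ru Bu) + δ * (k * Rd Bd) := by ring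
    have hle : ρ * ((tu + δ) * Ru Bu) ≤ (td - δ * k) * Rd Bd := by
      rw [e1, e2]; linarith [e3, hδ2]
    have H := hopt (tu + δ) (td - δ * k) Bu Bd (by linarith)
      (by linarith) hBu hBd hband htime'
    rw [min_eq_left hle] at H
    have H2 : ρ * ((tu + δ) * Ru Bu) ≤ ρ * (tu * Ru Bu) :=
      le_trans H (min_le_left _ _)
    have e4 : 0 < δ * (ρ * Ru Bu) := by positivity
    linarith [e1, H2, e4]
  · exact heq
  · -- decrease tu, increase td
    exfalso
    obtain ⟨s, hs⟩ : ∃ s : ℝ, s = ρ * Ru Bu + Rd Bd := ⟨_, rfl⟩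
    have hspos : 0 < s := by rw [hs]; positivity
    obtain ⟨δ, hδ⟩ : ∃ δ : ℝ,
        δ = min tu ((ρ * (tu * Ru Bu) - td * Rd Bd) / s) := ⟨_, rfl⟩
    have hδpos : 0 < δ := by
      rw [hδ]; exact lt_min htu' (div_pos (by linarith) hspos)
    have hδ1 : δ ≤ tu := by rw [hδ]; exact min_le_left _ _
    have hδ2 : δ * s ≤ ρ * (tu * Ru Bu) - td * Rd Bd := by
      refine (le_div_iff₀ hspos).mp ?_
      rw [hδ]; exact min_le_right _ _
    have htime' : (tu - δ) + α * (tu - δ) * Ru Bu / fmax + (td + δ) ≤ T := by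
      have h8 : α * (tu - δ) * Ru Bu ≤ α * tu * Ru Bu := by
        nlinarith [mul_nonneg (mul_nonneg hα hδpos.le) hru'.le]
      have h9 : α * (tu - δ) * Ru Bu / fmax ≤ α * tu * Ru Bu / fmax := by
        gcongr
      linarith
    rw [hs] at hδ2
    have e1 : (td + δ) * Rd Bd = td * Rd Bd + δ * Rd Bd := by ring
    have e2 : ρ * ((tu - δ) * Ru Bu) = ρ * (tu * Ru Bu) - δ * (ρ * Ru Bu) := by
      ring
    have e3 : δ * (ρ * Ru Bu + Rd Bd) = δ * (ρ * Ru Bu) + δ * Rd Bd := by ring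
    have hle : (td + δ) * Rd Bd ≤ ρ * ((tu - δ) * Ru Bu) := by
      rw [e1, e2]; linarith [e3, hδ2]
    have H := hopt (tu - δ) (td + δ) Bu Bd (by linarith) (by linarith)
      hBu hBd hband htime'
    rw [min_eq_right hle] at H
    have H2 : (td + δ) * Rd Bd ≤ td * Rd Bd :=
      le_trans H (min_le_right _ _)
    have e4 : 0 < δ * Rd Bd := by positivity
    linarith [e1, H2, e4]
end

section
/- (Theorem 1, optimal value of (P2).) Let ρ ∈ (0,1], α ≥ 0, f_max > 0, T > 0, B_max > 0 and c_u, c_d > 0, with rates R_u(B) = B·log₂(1 + c_u/B), R_d(B) = B·log₂(1 + c_d/B) for B > 0 (and 0 at B = 0). Then the supremum of min(ρ·t_u·R_u(B_u), t_d·R_d(B_d)) over t_u, t_d, B_u, B_d ≥ 0 with B_u + B_d ≤ B_max and t_u + α·t_u·R_u(B_u)/f_max + t_d ≤ T equals T / (m + α/(ρ·f_max)), where m = inf over B_u, B_d > 0 with B_u + B_d ≤ B_max of [1/(ρ·R_u(B_u)) + 1/R_d(B_d)]. -/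
lemma aux_R_pos {c B : ℝ} (hc : 0 < c) (hB : 0 < B) :
    0 < B * Real.logb 2 (1 + c / B) := by
  apply mul_pos hB
  apply Real.logb_pos one_lt_two
  have : 0 < c / B := div_pos hc hB
  linarith

lemma aux_R_le {c B : ℝ} (hc : 0 < c) (hB : 0 < B) :
    B * Real.logb 2 (1 + c / B) ≤ c / Real.log 2 := by
  have hl2 : 0 < Real.log 2 := Real.log_pos one_lt_two
  have hx : 0 < 1 + c / B := by positivity
  have h1 : Real.log (1 + c / B) ≤ c / B := by
    have := Real.log_le_sub_one_of_pos hx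
    linarith
  have h2 : B * Real.log (1 + c / B) ≤ c := by
    calc B * Real.log (1 + c / B) ≤ B * (c / B) := by gcongr
      _ = c := by field_simp
  rw [Real.logb, div_eq_mul_inv, ← mul_assoc, div_eq_mul_inv]
  exact mul_le_mul_of_nonneg_right h2 (by positivity)

/-- **Theorem 1 (optimal value of (P2)).**
Let `ρ ∈ (0,1]`, `α ≥ 0`, `f_max, T, B_max, c_u, c_d > 0`, with Shannon rates
`R_u(B) = B·log₂(1 + c_u/B)`, `R_d(B) = B·log₂(1 + c_d/B)` (vanishing at 0).
The supremum of `min(ρ·t_u·R_u(B_u), t_d·R_d(B_d))` over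
`t_u, t_d, B_u, B_d ≥ 0` with `B_u + B_d ≤ B_max` and
`t_u + α·t_u·R_u(B_u)/f_max + t_d ≤ T` equals `T / (m + α/(ρ·f_max))`, where `m`
is the infimum of `1/(ρ·R_u(B_u)) + 1/R_d(B_d)` over `B_u, B_d > 0` with
`B_u + B_d ≤ B_max`. -/
theorem optimal_value_P2
    (ρ α fmax T Bmax cu cd : ℝ)
    (hρ0 : 0 < ρ) (hρ1 : ρ ≤ 1) (hα : 0 ≤ α) (hf : 0 < fmax)
    (hT : 0 < T) (hB : 0 < Bmax) (hcu : 0 < cu) (hcd : 0 < cd)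
    (Ru Rd : ℝ → ℝ)
    (hRu : ∀ B : ℝ, Ru B = B * Real.logb 2 (1 + cu / B))
    (hRd : ∀ B : ℝ, Rd B = B * Real.logb 2 (1 + cd / B))
    (m : ℝ)
    (hm : m = sInf {y : ℝ | ∃ Bu Bd : ℝ, 0 < Bu ∧ 0 < Bd ∧ Bu + Bd ≤ Bmax ∧
      y = 1 / (ρ * Ru Bu) + 1 / Rd Bd}) :
    sSup {x : ℝ | ∃ tu td Bu Bd : ℝ, 0 ≤ tu ∧ 0 ≤ td ∧ 0 ≤ Bu ∧ 0 ≤ Bd ∧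
        Bu + Bd ≤ Bmax ∧ tu + α * tu * Ru Bu / fmax + td ≤ T ∧
        x = min (ρ * (tu * Ru Bu)) (td * Rd Bd)} =
      T / (m + α / (ρ * fmax)) := by
  have hl2 : 0 < Real.log 2 := Real.log_pos one_lt_two
  set a := α / (ρ * fmax) with ha_def
  have ha : 0 ≤ a := by positivity
  set G : Set ℝ := {y : ℝ | ∃ Bu Bd : ℝ, 0 < Bu ∧ 0 < Bd ∧ Bu + Bd ≤ Bmax ∧
      y = 1 / (ρ * Ru Bu) + 1 / Rd Bd} with hG
  set S : Set ℝ := {x : ℝ | ∃ tu td Bu Bd : ℝ, 0 ≤ tu ∧ 0 ≤ td ∧ 0 ≤ Bu ∧ 0 ≤ Bd ∧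
        Bu + Bd ≤ Bmax ∧ tu + α * tu * Ru Bu / fmax + td ≤ T ∧
        x = min (ρ * (tu * Ru Bu)) (td * Rd Bd)} with hS
  have hRupos : ∀ B : ℝ, 0 < B → 0 < Ru B := fun B hB => by
    rw [hRu]; exact aux_R_pos hcu hB
  have hRdpos : ∀ B : ℝ, 0 < B → 0 < Rd B := fun B hB => by
    rw [hRd]; exact aux_R_pos hcd hB
  have hGne : G.Nonempty :=
    ⟨_, Bmax / 2, Bmax / 2, by positivity, by positivity, by linarith, rfl⟩
  -- lower bound for G
  set δ := Real.log 2 / (ρ * cu) with hδ_def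
  have hδpos : 0 < δ := by positivity
  have hGlb : ∀ y ∈ G, δ ≤ y := by
    rintro y ⟨Bu, Bd, hBu, hBd, _, rfl⟩
    have hru := hRupos Bu hBu
    have hrd := hRdpos Bd hBd
    have hle : Ru Bu ≤ cu / Real.log 2 := by rw [hRu]; exact aux_R_le hcu hBu
    have h1 : ρ * Ru Bu ≤ ρ * (cu / Real.log 2) := by gcongr
    have h2 : 1 / (ρ * (cu / Real.log 2)) ≤ 1 / (ρ * Ru Bu) :=
      one_div_le_one_div_of_le (by positivity) h1
    have h3 : δ = 1 / (ρ * (cu / Real.log 2)) := by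
      rw [hδ_def]; field_simp
    have h4 : 0 ≤ 1 / Rd Bd := by positivity
    linarith
  have hm_lb : δ ≤ m := by rw [hm]; exact le_csInf hGne hGlb
  have hma : 0 < m + a := by linarith
  have hGbdd : BddBelow G := ⟨δ, hGlb⟩
  -- membership of optimal points
  have hmem : ∀ Bu Bd : ℝ, 0 < Bu → 0 < Bd → Bu + Bd ≤ Bmax →
      T / ((1 / (ρ * Ru Bu) + 1 / Rd Bd) + a) ∈ S := by
    intro Bu Bd hBu hBd hsum
    have hru := hRupos Bu hBu
    have hrd := hRdpos Bd hBd
    have hg : 0 < 1 / (ρ * Ru Bu) + 1 / Rd Bd := by positivity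
    have hga : 0 < (1 / (ρ * Ru Bu) + 1 / Rd Bd) + a := by linarith
    set x0 := T / ((1 / (ρ * Ru Bu) + 1 / Rd Bd) + a) with hx0_def
    have hx0 : 0 < x0 := div_pos hT hga
    refine ⟨x0 / (ρ * Ru Bu), x0 / Rd Bd, Bu, Bd, by positivity, by positivity,
      hBu.le, hBd.le, hsum, ?_, ?_⟩
    · have hT' : x0 * ((1 / (ρ * Ru Bu) + 1 / Rd Bd) + a) = T :=
        div_mul_cancel₀ T hga.ne'
      have heq : x0 / (ρ * Ru Bu) + α * (x0 / (ρ * Ru Bu)) * Ru Bu / fmax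
          + x0 / Rd Bd = x0 * ((1 / (ρ * Ru Bu) + 1 / Rd Bd) + a) := by
        rw [ha_def]
        field_simp
        ring
      rw [heq, hT']
    · have h1 : ρ * (x0 / (ρ * Ru Bu) * Ru Bu) = x0 := by field_simp
      have h2 : x0 / Rd Bd * Rd Bd = x0 := by field_simp
      rw [h1, h2, min_self]
  have hSne : S.Nonempty := by
    refine ⟨0, 0, 0, 0, 0, le_refl _, le_refl _, le_refl _, le_refl _,
      by linarith, by simpa using hT.le, by simp⟩
  -- upper bound
  have hub : ∀ x ∈ S, x ≤ T / (m + a) := by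
    rintro x ⟨tu, td, Bu, Bd, htu, htd, hBu0, hBd0, hsum, hcon, rfl⟩
    set x := min (ρ * (tu * Ru Bu)) (td * Rd Bd) with hx_def
    rcases le_or_gt x 0 with h | h
    · exact h.trans (by positivity)
    have h1 : x ≤ ρ * (tu * Ru Bu) := min_le_left _ _
    have h2 : x ≤ td * Rd Bd := min_le_right _ _
    have hA : 0 < tu * Ru Bu := by
      have h' : 0 < ρ * (tu * Ru Bu) := lt_of_lt_of_le h h1
      rcases mul_pos_iff.mp h' with ⟨_, h2⟩ | ⟨h2, _⟩
      · exact h2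
      · linarith
    have htu' : 0 < tu := by
      rcases htu.lt_or_eq with h' | h'
      · exact h'
      · exfalso; rw [← h'] at hA; simp at hA
    have hru : 0 < Ru Bu := by
      rcases mul_pos_iff.mp hA with ⟨_, h2⟩ | ⟨h2, _⟩
      · exact h2
      · linarith
    have hBu : 0 < Bu := by
      rcases hBu0.lt_or_eq with h' | h'
      · exact h'
      · exfalso; rw [← h', hRu] at hru; simp at hru
    have hB' : 0 < td * Rd Bd := lt_of_lt_of_le h h2
    have htd' : 0 < td := by
      rcases htd.lt_or_eq with h' | h'
      · exact h'
      · exfalso; rw [← h'] at hB'; simp at hB'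
    have hrd : 0 < Rd Bd := by
      rcases mul_pos_iff.mp hB' with ⟨_, h2⟩ | ⟨h2, _⟩
      · exact h2
      · linarith
    have hBd : 0 < Bd := by
      rcases hBd0.lt_or_eq with h' | h'
      · exact h'
      · exfalso; rw [← h', hRd] at hrd; simp at hrd
    have hgG : (1 / (ρ * Ru Bu) + 1 / Rd Bd) ∈ G := ⟨Bu, Bd, hBu, hBd, hsum, rfl⟩
    have hmg : m ≤ 1 / (ρ * Ru Bu) + 1 / Rd Bd := by
      rw [hm]; exact csInf_le hGbdd hgG
    have e1 : x / (ρ * Ru Bu) ≤ tu :=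
      (div_le_iff₀ (by positivity)).mpr (le_of_le_of_eq h1 (by ring))
    have e2 : x / Rd Bd ≤ td := (div_le_iff₀ hrd).mpr h2
    have key : x * ((1 / (ρ * Ru Bu) + 1 / Rd Bd) + a) ≤ T := by
      have heq : x * ((1 / (ρ * Ru Bu) + 1 / Rd Bd) + a)
          = x / (ρ * Ru Bu) + α * (x / (ρ * Ru Bu)) * Ru Bu / fmax + x / Rd Bd := by
        rw [ha_def]; field_simp; ring
      have e3 : α * (x / (ρ * Ru Bu)) * Ru Bu / fmax ≤ α * tu * Ru Bu / fmax := by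
        gcongr
      rw [heq]
      calc x / (ρ * Ru Bu) + α * (x / (ρ * Ru Bu)) * Ru Bu / fmax + x / Rd Bd
          ≤ tu + α * tu * Ru Bu / fmax + td := by linarith
        _ ≤ T := hcon
    have hxm : x * (m + a) ≤ T :=
      le_trans (mul_le_mul_of_nonneg_left (by linarith) h.le) key
    exact (le_div_iff₀ hma).mpr hxm
  have hSbdd : BddAbove S := ⟨T / (m + a), hub⟩
  apply le_antisymm
  · exact csSup_le hSne hub
  · -- lower bound on sSup
    set L := sSup S with hL_def
    have hL0 : 0 < L := by
      have hx0 : T / ((1 / (ρ * Ru (Bmax / 2)) + 1 / Rd (Bmax / 2)) + a) ∈ S :=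
        hmem _ _ (by positivity) (by positivity) (by linarith)
      have hle := le_csSup hSbdd hx0
      have hru := hRupos (Bmax / 2) (by positivity)
      have hrd := hRdpos (Bmax / 2) (by positivity)
      have : 0 < T / ((1 / (ρ * Ru (Bmax / 2)) + 1 / Rd (Bmax / 2)) + a) := by
        apply div_pos hT; positivity
      linarith
    have hfor : ∀ y ∈ G, T / L - a ≤ y := by
      rintro y ⟨Bu, Bd, hBu, hBd, hsum, rfl⟩
      have hru := hRupos Bu hBu
      have hrd := hRdpos Bd hBd
      have hga : 0 < (1 / (ρ * Ru Bu) + 1 / Rd Bd) + a := by positivity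
      have hle := le_csSup hSbdd (hmem Bu Bd hBu hBd hsum)
      have hT' : T ≤ L * ((1 / (ρ * Ru Bu) + 1 / Rd Bd) + a) :=
        (div_le_iff₀ hga).mp hle
      have : T / L ≤ (1 / (ρ * Ru Bu) + 1 / Rd Bd) + a :=
        (div_le_iff₀ hL0).mpr (by linarith [mul_comm L ((1 / (ρ * Ru Bu) + 1 / Rd Bd) + a)])
      linarith
    have h5 : T / L - a ≤ m := by rw [hm]; exact le_csInf hGne hfor
    have h6 : T ≤ L * (m + a) := by
      have h7 : T / L ≤ m + a := by linarith
      have h8 := (div_le_iff₀ hL0).mp h7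
      linarith [mul_comm L (m + a)]
    exact (div_le_iff₀ hma).mpr h6
end
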